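/- Let M = L* + S* where, for the iterate pair produced by one full iteration of IRPCA-IHT (entrywise hard thresholding at level ζ_t = μ²σ_max(F)²(d/n)c_W/5^{t−1} followed by spectral hard thresholding through the feature map): if ‖L* − L_{t−1}‖∞ ≤ ζ_t then ‖L* − L_t‖∞ ≤ ζ_t/5 = ζ_{t+1}, assuming L* = FᵀW*F with W* symmetric of rank r and ‖W*‖₂ ≤ c_W, F full row rank with incoherence constant μ and condition number κ, and S* having at most z ≤ n/(20μ²dκ²) nonzeros per row and column. Consequently by induction ‖L* − L_T‖∞ ≤ ε and ‖S* − S_T‖∞ ≤ ε for T > ⌈log₅(2μ²σ_max(F)²(d/n)c_W/ε)⌉ + 1. -/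

import Mathlib

open Matrix

noncomputable def specNorm {m n : Type*} [Fintype m] [Fintype n] [DecidableEq n]
    (A : Matrix m n ℝ) : ℝ :=
  ‖LinearMap.toContinuousLinearMap (Matrix.toEuclideanLin A)‖

noncomputable def infNorm {m n : Type*} [Fintype m] [Fintype n] (A : Matrix m n ℝ) : ℝ :=
  ⨆ i, ⨆ j, |A i j|

noncomputable def nnzRow {m n : Type*} [Fintype n] (A : Matrix m n ℝ) (i : m) : ℕ :=
  (Finset.univ.filter fun j => A i j ≠ 0).card

noncomputable def nnzCol {m n : Type*} [Fintype m] (A : Matrix m n ℝ) (j : n) : ℕ :=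
  (Finset.univ.filter fun i => A i j ≠ 0).card

noncomputable def hardThresh {m n : Type*} (a : ℝ) (A : Matrix m n ℝ) : Matrix m n ℝ :=
  Matrix.of fun i j => if a < |A i j| then A i j else 0

noncomputable def sigmaMin {d n : Type*} [Fintype d] [Fintype n] [DecidableEq d]
    (F : Matrix d n ℝ) : ℝ :=
  sInf ((fun y : EuclideanSpace ℝ d => ‖Matrix.toEuclideanLin Fᵀ y‖) '' {y | ‖y‖ = 1})

noncomputable def pinv {d n : Type*} [Fintype d] [Fintype n] [DecidableEq d]
    (F : Matrix d n ℝ) : Matrix n d ℝ :=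
  Fᵀ * (F * Fᵀ)⁻¹

def IsTruncatedEigen {d : ℕ} (r : ℕ) (A B : Matrix (Fin d) (Fin d) ℝ) : Prop :=
  ∃ (Q : Matrix (Fin d) (Fin r) ℝ) (Λ : Fin r → ℝ)
    (Qp : Matrix (Fin d) (Fin (d - r)) ℝ) (Λp : Fin (d - r) → ℝ),
    Qᵀ * Q = 1 ∧ Qpᵀ * Qp = 1 ∧ Qᵀ * Qp = 0 ∧
    A = Q * Matrix.diagonal Λ * Qᵀ + Qp * Matrix.diagonal Λp * Qpᵀ ∧
    B = Q * Matrix.diagonal Λ * Qᵀ ∧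
    ∀ i j, |Λp j| ≤ |Λ i|

def symEmb {n₁ n₂ : Type*} (M : Matrix n₁ n₂ ℝ) : Matrix (n₁ ⊕ n₂) (n₁ ⊕ n₂) ℝ :=
  Matrix.fromBlocks 0 M Mᵀ 0

/-!
Hard thresholding at level `ζ` leaves an error `E = S* - S_t` that is supported inside the
support of `S*` and has entries at most `2ζ`; by the Schur test `‖E‖₂ ≤ 2zζ`. Pulled back
through the pseudo-inverse, the matrix being truncated is `W* + Δ` with
`‖Δ‖₂ ≤ ‖F†‖₂² ‖E‖₂ ≤ σ_min⁻² ‖E‖₂`, and a rank-`r` truncation moves it by at most `‖Δ‖₂`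
(a Weyl-type bound), so `‖W* - W_t‖₂ ≤ 2‖Δ‖₂`. Incoherence bounds every column of `F` by
`‖F‖₂ μ √(d/n)`, which turns this into `‖L* - L_t‖∞ ≤ 4zμ²(d/n)κ² · ζ ≤ ζ/5`. Starting from
`‖L*‖∞ ≤ ζ₁`, the thresholds decay geometrically.
-/

open scoped Matrix.Norms.L2Operator
open WithLp (toLp)

section L2OpNorm

variable {m n k : Type*} [Fintype m] [Fintype n] [Fintype k]

lemma norm_toLp_sq (x : n → ℝ) : ‖toLp 2 x‖ ^ 2 = ∑ i, x i ^ 2 := by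
  simp [EuclideanSpace.norm_sq_eq]

lemma norm_toLp_eq_sqrt (x : n → ℝ) : ‖toLp 2 x‖ = √(∑ i, x i ^ 2) := by
  rw [← norm_toLp_sq, Real.sqrt_sq (norm_nonneg _)]

lemma norm_toLp_sq_eq_dotProduct (x : n → ℝ) : ‖toLp 2 x‖ ^ 2 = x ⬝ᵥ x := by
  rw [norm_toLp_sq]
  simp [dotProduct, sq]

lemma abs_dotProduct_le (x y : n → ℝ) : |x ⬝ᵥ y| ≤ ‖toLp 2 x‖ * ‖toLp 2 y‖ := by
  simpa [EuclideanSpace.inner_toLp_toLp, dotProduct_comm] using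
    abs_real_inner_le_norm (toLp 2 x) (toLp 2 y)

variable [DecidableEq n] [DecidableEq k]

lemma specNorm_eq_l2_opNorm (A : Matrix m n ℝ) : specNorm A = ‖A‖ := rfl

lemma norm_toLp_mulVec_le (A : Matrix m n ℝ) (x : n → ℝ) :
    ‖toLp 2 (A *ᵥ x)‖ ≤ ‖A‖ * ‖toLp 2 x‖ :=
  A.l2_opNorm_mulVec (toLp 2 x)

lemma l2_opNorm_le_of_forall {A : Matrix m n ℝ} {C : ℝ} (hC : 0 ≤ C)
    (h : ∀ x, ‖toLp 2 (A *ᵥ x)‖ ≤ C * ‖toLp 2 x‖) : ‖A‖ ≤ C :=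
  ContinuousLinearMap.opNorm_le_bound _ hC fun v => h v.ofLp

lemma l2_opNorm_le_of_sum_sq_le {A : Matrix m n ℝ} {C : ℝ} (hC : 0 ≤ C)
    (h : ∀ x, ∑ i, (A *ᵥ x) i ^ 2 ≤ C ^ 2 * ∑ j, x j ^ 2) : ‖A‖ ≤ C := by
  refine l2_opNorm_le_of_forall hC fun x => (sq_le_sq₀ (norm_nonneg _) (by positivity)).mp ?_
  rw [mul_pow, norm_toLp_sq, norm_toLp_sq]
  exact h x

lemma l2_opNorm_transpose [DecidableEq m] (A : Matrix m n ℝ) : ‖Aᵀ‖ = ‖A‖ := by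
  rw [← conjTranspose_eq_transpose_of_trivial, l2_opNorm_conjTranspose]

lemma l2_opNorm_le_one_of_transpose_mul_self {P : Matrix m k ℝ} (hP : Pᵀ * P = 1) :
    ‖P‖ ≤ 1 := by
  have h : ‖P‖ * ‖P‖ ≤ 1 := by
    rw [← l2_opNorm_conjTranspose_mul_self, conjTranspose_eq_transpose_of_trivial, hP,
      ← diagonal_one, l2_opNorm_diagonal]
    exact (pi_norm_le_iff_of_nonneg zero_le_one).mpr fun _ => by simp
  nlinarith [norm_nonneg P]

lemma norm_toLp_mulVec_of_transpose_mul_self [DecidableEq m] {P : Matrix m k ℝ}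
    (hP : Pᵀ * P = 1) (c : k → ℝ) : ‖toLp 2 (P *ᵥ c)‖ = ‖toLp 2 c‖ := by
  have hP1 := l2_opNorm_le_one_of_transpose_mul_self hP
  refine le_antisymm ((norm_toLp_mulVec_le P c).trans (by nlinarith [norm_nonneg (toLp 2 c)])) ?_
  calc ‖toLp 2 c‖ = ‖toLp 2 (Pᵀ *ᵥ (P *ᵥ c))‖ := by rw [mulVec_mulVec, hP, one_mulVec]
    _ ≤ ‖Pᵀ‖ * ‖toLp 2 (P *ᵥ c)‖ := norm_toLp_mulVec_le _ _
    _ ≤ ‖toLp 2 (P *ᵥ c)‖ := by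
      rw [l2_opNorm_transpose]
      nlinarith [norm_nonneg (toLp 2 (P *ᵥ c))]

lemma abs_dotProduct_mulVec_le (B : Matrix m n ℝ) (u : m → ℝ) (v : n → ℝ) :
    |u ⬝ᵥ (B *ᵥ v)| ≤ ‖toLp 2 u‖ * ‖B‖ * ‖toLp 2 v‖ := by
  calc |u ⬝ᵥ (B *ᵥ v)| ≤ ‖toLp 2 u‖ * ‖toLp 2 (B *ᵥ v)‖ := abs_dotProduct_le u _
    _ ≤ ‖toLp 2 u‖ * (‖B‖ * ‖toLp 2 v‖) := by gcongr; exact norm_toLp_mulVec_le B v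
    _ = ‖toLp 2 u‖ * ‖B‖ * ‖toLp 2 v‖ := by ring

end L2OpNorm

section Rank

variable {m k K : Type*} [Fintype k] [Field K]

lemma ker_mulVecLin_eq_bot_iff_rank_eq (B : Matrix m k K) :
    LinearMap.ker B.mulVecLin = ⊥ ↔ B.rank = Fintype.card k := by
  have h := LinearMap.finrank_range_add_finrank_ker B.mulVecLin
  rw [Module.finrank_fintype_fun_eq_card] at h
  rw [← Submodule.finrank_eq_zero, rank]
  omega

lemma exists_mulVec_eq_zero_of_rank_lt (B : Matrix m k K) (h : B.rank < Fintype.card k) :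
    ∃ c ≠ 0, B *ᵥ c = 0 := by
  by_contra! hc
  refine h.ne ((ker_mulVecLin_eq_bot_iff_rank_eq B).mp ?_)
  exact LinearMap.ker_eq_bot'.mpr fun c hBc => by_contra fun h0 => hc c h0 hBc

end Rank

section Spectral

variable {m k l : Type*} [Fintype m] [Fintype k] [Fintype l] [DecidableEq k] [DecidableEq l]

lemma orthogonalSum_mul_eq {Q : Matrix m k ℝ} {Q' : Matrix m l ℝ} (hQ : Qᵀ * Q = 1)
    (hQ' : Q'ᵀ * Q = 0) (ev : k → ℝ) (ev' : l → ℝ) :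
    (Q * diagonal ev * Qᵀ + Q' * diagonal ev' * Q'ᵀ) * Q = Q * diagonal ev := by
  simp only [Matrix.add_mul, Matrix.mul_assoc, hQ, hQ', Matrix.mul_zero, Matrix.mul_one, add_zero]

lemma mul_norm_le_norm_diagonal_mulVec {ev : k → ℝ} {b : ℝ} (hb : 0 ≤ b)
    (hev : ∀ i, b ≤ |ev i|) (c : k → ℝ) : b * ‖toLp 2 c‖ ≤ ‖toLp 2 (diagonal ev *ᵥ c)‖ := by
  refine (sq_le_sq₀ (by positivity) (norm_nonneg _)).mp ?_
  rw [mul_pow, norm_toLp_sq, norm_toLp_sq, Finset.mul_sum]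
  refine Finset.sum_le_sum fun i _ => ?_
  rw [mulVec_diagonal, mul_pow, ← sq_abs (ev i)]
  gcongr
  exact hev i

variable [DecidableEq m]

lemma l2_opNorm_mul_diagonal_mul_transpose_le {P : Matrix m k ℝ} (hP : Pᵀ * P = 1)
    (ev : k → ℝ) : ‖P * diagonal ev * Pᵀ‖ ≤ ‖ev‖ := by
  have hP1 := l2_opNorm_le_one_of_transpose_mul_self hP
  calc ‖P * diagonal ev * Pᵀ‖ ≤ ‖P‖ * ‖ev‖ * ‖P‖ := by
        grw [l2_opNorm_mul, l2_opNorm_mul, l2_opNorm_diagonal, l2_opNorm_transpose]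
    _ ≤ 1 * ‖ev‖ * 1 := by gcongr
    _ = ‖ev‖ := by ring

/-- `W` kills a nonzero vector in the span of the `card k > rank W` orthonormal
eigenvectors `P` of `A`; on that vector `Δ` acts as `A` does. -/
lemma le_l2_opNorm_of_mul_eq_mul_diagonal {A W Δ : Matrix m m ℝ} {P : Matrix m k ℝ}
    {ev : k → ℝ} {b : ℝ} (hA : A = W + Δ) (hW : W.rank < Fintype.card k) (hP : Pᵀ * P = 1)
    (hAP : A * P = P * diagonal ev) (hb : 0 ≤ b) (hev : ∀ i, b ≤ |ev i|) : b ≤ ‖Δ‖ := by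
  obtain ⟨c, hc0, hWc⟩ :=
    exists_mulVec_eq_zero_of_rank_lt (W * P) ((rank_mul_le_left W P).trans_lt hW)
  have hΔc : Δ *ᵥ (P *ᵥ c) = P *ᵥ (diagonal ev *ᵥ c) := by
    rw [mulVec_mulVec, mulVec_mulVec, ← hAP, hA, Matrix.add_mul, add_mulVec, hWc, zero_add]
  have hc : 0 < ‖toLp 2 c‖ :=
    norm_pos_iff.mpr fun h => hc0 (by simpa using congrArg WithLp.ofLp h)
  refine le_of_mul_le_mul_right ?_ hc
  calc b * ‖toLp 2 c‖ ≤ ‖toLp 2 (diagonal ev *ᵥ c)‖ := mul_norm_le_norm_diagonal_mulVec hb hev c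
    _ = ‖toLp 2 (Δ *ᵥ (P *ᵥ c))‖ := by rw [hΔc, norm_toLp_mulVec_of_transpose_mul_self hP]
    _ ≤ ‖Δ‖ * ‖toLp 2 (P *ᵥ c)‖ := norm_toLp_mulVec_le _ _
    _ = ‖Δ‖ * ‖toLp 2 c‖ := by rw [norm_toLp_mulVec_of_transpose_mul_self hP]

end Spectral

lemma l2_opNorm_sub_le_of_isTruncatedEigen {d r : ℕ} {A B W Δ : Matrix (Fin d) (Fin d) ℝ}
    (h : IsTruncatedEigen r A B) (hA : A = W + Δ) (hW : W.rank ≤ r) : ‖B - A‖ ≤ ‖Δ‖ := by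
  obtain ⟨Q, Λ, Qp, Λp, hQ, hQp, hQQp, rfl, rfl, hΛ⟩ := h
  have hQpQ : Qpᵀ * Q = 0 := by
    rw [← transpose_transpose Q, ← transpose_mul, hQQp, transpose_zero]
  have hAQ := orthogonalSum_mul_eq hQ hQpQ Λ Λp
  have hAQp := orthogonalSum_mul_eq hQp hQQp Λp Λ
  rw [add_comm] at hAQp
  -- The kept eigenvectors `Q` together with the discarded one `Qp · j` are `r + 1`
  -- orthonormal eigenvectors whose eigenvalues all have modulus at least `|Λp j|`.
  have htail : ∀ j, |Λp j| ≤ ‖Δ‖ := by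
    intro j
    set q := Qp.submatrix id fun _ : Unit => j
    have hQq : Qᵀ * q = 0 := by
      ext a u
      simpa [q, mul_apply] using congrFun (congrFun hQQp a) j
    have hqQ : qᵀ * Q = 0 := by
      ext u a
      simpa [q, mul_apply] using congrFun (congrFun hQpQ j) a
    have hqq : qᵀ * q = 1 := by
      ext u v
      simpa [q, mul_apply] using congrFun (congrFun hQp j) j
    have hAq : (Q * diagonal Λ * Qᵀ + Qp * diagonal Λp * Qpᵀ) * q =
        q * diagonal fun _ : Unit => Λp j := by
      have hmul : ∀ X : Matrix (Fin d) (Fin d) ℝ, X * q = (X * Qp).submatrix id fun _ => j :=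
        fun X => by ext; simp [q, mul_apply]
      rw [hmul, hAQp]
      ext i u
      simp [q, mul_apply, diagonal_apply]
    refine le_l2_opNorm_of_mul_eq_mul_diagonal (P := fromCols Q q)
      (ev := Sum.elim Λ fun _ => Λp j) hA (by simpa using Nat.lt_succ_of_le hW) ?_ ?_
      (abs_nonneg _) ?_
    · rw [transpose_fromCols, fromRows_mul_fromCols, hQ, hQq, hqQ, hqq, fromBlocks_one]
    · rw [mul_fromCols, hAQ, hAq, ← fromBlocks_diagonal, fromCols_mul_fromBlocks]
      simp only [Matrix.mul_zero, add_zero, zero_add]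
    · rintro (a | _)
      · exact hΛ a j
      · exact le_rfl
  calc ‖Q * diagonal Λ * Qᵀ - (Q * diagonal Λ * Qᵀ + Qp * diagonal Λp * Qpᵀ)‖
      = ‖Qp * diagonal Λp * Qpᵀ‖ := by rw [sub_add_cancel_left, norm_neg]
    _ ≤ ‖Λp‖ := l2_opNorm_mul_diagonal_mul_transpose_le hQp Λp
    _ ≤ ‖Δ‖ := (pi_norm_le_iff_of_nonneg (norm_nonneg _)).mpr htail

section PseudoInverse

variable {k ι : Type*} [Fintype k] [Fintype ι] [DecidableEq k]

lemma mul_pinv_eq_one {F : Matrix k ι ℝ} (h : F.rank = Fintype.card k) : F * pinv F = 1 := by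
  have hker : LinearMap.ker (F * Fᵀ).mulVecLin = ⊥ :=
    (ker_mulVecLin_eq_bot_iff_rank_eq _).mpr (by rw [rank_self_mul_transpose, h])
  have hunit : IsUnit (F * Fᵀ) := mulVec_injective_iff_isUnit.mp (LinearMap.ker_eq_bot.mp hker)
  rw [pinv, ← Matrix.mul_assoc]
  exact mul_nonsing_inv _ ((isUnit_iff_isUnit_det _).mp hunit)

lemma sigmaMin_nonneg (F : Matrix k ι ℝ) : 0 ≤ sigmaMin F :=
  Real.sInf_nonneg (by rintro _ ⟨y, -, rfl⟩; exact norm_nonneg _)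

lemma sigmaMin_mul_norm_le (F : Matrix k ι ℝ) (w : k → ℝ) :
    sigmaMin F * ‖toLp 2 w‖ ≤ ‖toLp 2 (Fᵀ *ᵥ w)‖ := by
  rcases eq_or_ne (toLp 2 w) 0 with hw | hw
  · simp [hw]
  have hw' : 0 < ‖toLp 2 w‖ := norm_pos_iff.mpr hw
  have hunit : ‖toLp 2 w‖⁻¹ • toLp 2 w ∈ {y : EuclideanSpace ℝ k | ‖y‖ = 1} := by
    simp [norm_smul, hw'.ne']
  have h : sigmaMin F ≤ ‖toEuclideanLin Fᵀ (‖toLp 2 w‖⁻¹ • toLp 2 w)‖ :=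
    csInf_le ⟨0, by rintro _ ⟨y, -, rfl⟩; exact norm_nonneg _⟩ ⟨_, hunit, rfl⟩
  rw [map_smul, norm_smul, norm_inv, norm_norm, le_inv_mul_iff₀ hw', mul_comm] at h
  exact h

lemma l2_opNorm_pinv_le [DecidableEq ι] {F : Matrix k ι ℝ} (hF : F * pinv F = 1)
    (hσ : 0 < sigmaMin F) : ‖pinv F‖ ≤ (sigmaMin F)⁻¹ := by
  refine l2_opNorm_le_of_forall (inv_nonneg.mpr hσ.le) fun x => ?_
  have hy : pinv F *ᵥ x = Fᵀ *ᵥ ((F * Fᵀ)⁻¹ *ᵥ x) := by rw [pinv, mulVec_mulVec]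
  generalize (F * Fᵀ)⁻¹ *ᵥ x = w at hy
  have hFy : F *ᵥ (pinv F *ᵥ x) = x := by rw [mulVec_mulVec, hF, one_mulVec]
  generalize pinv F *ᵥ x = y at hy hFy ⊢
  have hyy : ‖toLp 2 y‖ ^ 2 ≤ ‖toLp 2 w‖ * ‖toLp 2 x‖ := by
    calc ‖toLp 2 y‖ ^ 2 = (Fᵀ *ᵥ w) ⬝ᵥ y := by rw [norm_toLp_sq_eq_dotProduct, ← hy]
      _ = w ⬝ᵥ x := by
          rw [dotProduct_comm, dotProduct_mulVec, vecMul_transpose, hFy, dotProduct_comm]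
      _ ≤ ‖toLp 2 w‖ * ‖toLp 2 x‖ := (le_abs_self _).trans (abs_dotProduct_le w x)
  have hσw : sigmaMin F * ‖toLp 2 w‖ ≤ ‖toLp 2 y‖ := hy ▸ sigmaMin_mul_norm_le F w
  rw [le_inv_mul_iff₀ hσ]
  rcases (norm_nonneg (toLp 2 y)).eq_or_lt with h0 | hpos
  · rw [← h0, mul_zero]
    exact norm_nonneg _
  refine le_of_mul_le_mul_right ?_ hpos
  nlinarith [norm_nonneg (toLp 2 x)]

end PseudoInverse

section HardThreshold

variable {m n : Type*} {X Y : Matrix m n ℝ} {ζ : ℝ} {i : m} {j : n}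

lemma abs_sub_hardThresh_add_apply_le (h : |Y i j| ≤ ζ) :
    |(X - hardThresh ζ (X + Y)) i j| ≤ 2 * ζ := by
  simp only [hardThresh, Matrix.sub_apply, Matrix.of_apply]
  split_ifs with hkeep <;> rw [Matrix.add_apply] at *
  · rw [sub_add_cancel_left, abs_neg]
    linarith [abs_nonneg (Y i j)]
  · have := abs_sub (X i j + Y i j) (Y i j)
    rw [add_sub_cancel_right] at this
    rw [sub_zero]
    linarith [not_lt.mp hkeep]

lemma sub_hardThresh_add_apply_eq_zero (h : |Y i j| ≤ ζ) (hX : X i j = 0) :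
    (X - hardThresh ζ (X + Y)) i j = 0 := by
  simp [hardThresh, hX, h.not_gt]

end HardThreshold

lemma nnzRow_le_of_ne_zero {m n : Type*} [Fintype n] {A B : Matrix m n ℝ}
    (h : ∀ i j, A i j ≠ 0 → B i j ≠ 0) (i : m) : nnzRow A i ≤ nnzRow B i :=
  Finset.card_le_card fun j hj => by
    simp only [Finset.mem_filter] at hj ⊢
    exact ⟨hj.1, h i j hj.2⟩

lemma nnzCol_le_of_ne_zero {m n : Type*} [Fintype m] {A B : Matrix m n ℝ}
    (h : ∀ i j, A i j ≠ 0 → B i j ≠ 0) (j : n) : nnzCol A j ≤ nnzCol B j :=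
  Finset.card_le_card fun i hi => by
    simp only [Finset.mem_filter] at hi ⊢
    exact ⟨hi.1, h i j hi.2⟩

lemma transpose_mul_mul_apply {k n : Type*} [Fintype k] (F : Matrix k n ℝ)
    (B : Matrix k k ℝ) (i j : n) : (Fᵀ * B * F) i j = Fᵀ i ⬝ᵥ (B *ᵥ Fᵀ j) := by
  rw [Matrix.mul_assoc]
  simp [mul_apply, dotProduct, mulVec]

section EntrywiseNorm

variable {m n k : Type*} [Fintype m] [Fintype n] [Fintype k]

lemma abs_le_infNorm (A : Matrix m n ℝ) (i : m) (j : n) : |A i j| ≤ infNorm A :=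
  (le_ciSup (Finite.bddAbove_range fun j => |A i j|) j).trans
    (le_ciSup (Finite.bddAbove_range fun i => ⨆ j, |A i j|) i)

lemma infNorm_nonneg (A : Matrix m n ℝ) : 0 ≤ infNorm A :=
  Real.iSup_nonneg fun _ => Real.iSup_nonneg fun _ => abs_nonneg _

lemma infNorm_le {A : Matrix m n ℝ} {a : ℝ} (ha : 0 ≤ a) (h : ∀ i j, |A i j| ≤ a) :
    infNorm A ≤ a :=
  Real.iSup_le (fun i => Real.iSup_le (h i) ha) ha

lemma sum_abs_le_card_support_mul {f : n → ℝ} {a : ℝ} (h : ∀ j, |f j| ≤ a) :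
    ∑ j, |f j| ≤ (Finset.univ.filter fun j => f j ≠ 0).card * a := by
  rw [← Finset.sum_filter_of_ne fun j _ hj => abs_ne_zero.mp hj]
  simpa using Finset.sum_le_card_nsmul _ _ _ fun j _ => h j

lemma l2_opNorm_le_of_sum_abs_le [DecidableEq n] {E : Matrix m n ℝ} {a : ℝ} (ha : 0 ≤ a)
    (hr : ∀ i, ∑ j, |E i j| ≤ a) (hc : ∀ j, ∑ i, |E i j| ≤ a) : ‖E‖ ≤ a := by
  refine l2_opNorm_le_of_sum_sq_le ha fun x => ?_
  have hrow : ∀ i, (E *ᵥ x) i ^ 2 ≤ (∑ j, |E i j|) * ∑ j, |E i j| * x j ^ 2 := fun i =>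
    Finset.sum_sq_le_sum_mul_sum_of_sq_le_mul _ (fun j _ => abs_nonneg _)
      (fun j _ => by positivity) fun j _ => by rw [mul_pow, ← sq_abs (E i j)]; nlinarith
  calc ∑ i, (E *ᵥ x) i ^ 2 ≤ ∑ i, a * ∑ j, |E i j| * x j ^ 2 := by
        gcongr with i
        exact (hrow i).trans (by gcongr; exact hr i)
    _ = a * ∑ j, (∑ i, |E i j|) * x j ^ 2 := by
        rw [← Finset.mul_sum, Finset.sum_comm]
        simp only [Finset.sum_mul]
    _ ≤ a * ∑ j, a * x j ^ 2 := by gcongr with j; exact hc j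
    _ = a ^ 2 * ∑ j, x j ^ 2 := by rw [← Finset.mul_sum]; ring

lemma l2_opNorm_le_nnz_mul_infNorm [DecidableEq n] (E : Matrix m n ℝ) {z : ℕ}
    (hr : ∀ i, nnzRow E i ≤ z) (hc : ∀ j, nnzCol E j ≤ z) : ‖E‖ ≤ z * infNorm E := by
  have hE := abs_le_infNorm E
  have h0 := infNorm_nonneg E
  refine l2_opNorm_le_of_sum_abs_le (by positivity) (fun i => ?_) fun j => ?_
  · exact (sum_abs_le_card_support_mul (hE i)).trans
      (mul_le_mul_of_nonneg_right (by exact_mod_cast hr i) h0)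
  · exact (sum_abs_le_card_support_mul (hE · j)).trans
      (mul_le_mul_of_nonneg_right (by exact_mod_cast hc j) h0)

lemma infNorm_transpose_mul_mul_le [DecidableEq k] {F : Matrix k n ℝ} {G : ℝ}
    (hG : ∀ i, ‖toLp 2 (Fᵀ i)‖ ≤ G) (B : Matrix k k ℝ) :
    infNorm (Fᵀ * B * F) ≤ ‖B‖ * G ^ 2 := by
  refine infNorm_le (by positivity) fun i j => ?_
  rw [transpose_mul_mul_apply]
  calc |Fᵀ i ⬝ᵥ (B *ᵥ Fᵀ j)| ≤ ‖toLp 2 (Fᵀ i)‖ * ‖B‖ * ‖toLp 2 (Fᵀ j)‖ :=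
        abs_dotProduct_mulVec_le B _ _
    _ ≤ G * ‖B‖ * G := by
        have := (norm_nonneg _).trans (hG i)
        gcongr <;> exact hG _
    _ = ‖B‖ * G ^ 2 := by ring

lemma norm_toLp_transpose_apply_le {l : Type*} [Fintype l] [DecidableEq n] [DecidableEq l]
    {F : Matrix k n ℝ} {V : Matrix n l ℝ} (hV : Vᵀ * V = 1) (hFV : F * V * Vᵀ = F) (i : n) :
    ‖toLp 2 (Fᵀ i)‖ ≤ ‖F‖ * ‖toLp 2 (V i)‖ := by
  have hcol : Fᵀ i = (F * V) *ᵥ V i := by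
    ext a
    conv_lhs => rw [← hFV]
    simp [mul_apply, mulVec, dotProduct]
  calc ‖toLp 2 (Fᵀ i)‖ ≤ ‖F * V‖ * ‖toLp 2 (V i)‖ := hcol ▸ norm_toLp_mulVec_le _ _
    _ ≤ ‖F‖ * 1 * ‖toLp 2 (V i)‖ := by
        gcongr
        exact (l2_opNorm_mul F V).trans
          (by gcongr; exact l2_opNorm_le_one_of_transpose_mul_self hV)
    _ = ‖F‖ * ‖toLp 2 (V i)‖ := by ring

lemma norm_toLp_transpose_apply_le_of_svd {l : Type*} [Fintype l] [DecidableEq n]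
    [DecidableEq l] {F : Matrix k n ℝ} {U : Matrix k l ℝ} {σ : l → ℝ} {V : Matrix n l ℝ}
    {c : ℝ} (hV : Vᵀ * V = 1) (hF : F = U * diagonal σ * Vᵀ)
    (hinc : ∀ i, √(∑ j, V i j ^ 2) ≤ c) (i : n) : ‖toLp 2 (Fᵀ i)‖ ≤ ‖F‖ * c := by
  have hFV : F * V * Vᵀ = F := by
    rw [hF, Matrix.mul_assoc (U * diagonal σ) Vᵀ V, hV, Matrix.mul_one]
  refine (norm_toLp_transpose_apply_le hV hFV i).trans ?_
  rw [norm_toLp_eq_sqrt]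
  gcongr
  exact hinc i

lemma sparse_recovery {Lstar Sstar Lprev : Matrix m n ℝ} {ζ : ℝ}
    (h : infNorm (Lstar - Lprev) ≤ ζ) :
    infNorm (Sstar - hardThresh ζ (Lstar + Sstar - Lprev)) ≤ 2 * ζ ∧
      ∀ i j, (Sstar - hardThresh ζ (Lstar + Sstar - Lprev)) i j ≠ 0 → Sstar i j ≠ 0 := by
  have hY := fun i j => (abs_le_infNorm _ i j).trans h
  have hζ := (infNorm_nonneg _).trans h
  rw [show Lstar + Sstar - Lprev = Sstar + (Lstar - Lprev) by abel]
  exact ⟨infNorm_le (by linarith) fun i j => abs_sub_hardThresh_add_apply_le (hY i j),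
    fun i j => mt (sub_hardThresh_add_apply_eq_zero (hY i j))⟩

end EntrywiseNorm

lemma two_mul_div_five_pow_le {C ε : ℝ} (hC : 0 ≤ C) (hε : 0 < ε) {T : ℕ}
    (hT : ⌈Real.logb 5 (2 * C / ε)⌉₊ + 1 < T) : 2 * (C / 5 ^ (T - 1)) ≤ ε := by
  rcases hC.eq_or_lt with rfl | hC
  · simpa using hε.le
  have hlog : Real.logb 5 (2 * C / ε) ≤ ((T - 1 : ℕ) : ℝ) :=
    (Nat.le_ceil _).trans (by exact_mod_cast (by omega : ⌈Real.logb 5 (2 * C / ε)⌉₊ ≤ T - 1))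
  rw [Real.logb_le_iff_le_rpow (by norm_num) (by positivity), Real.rpow_natCast,
    div_le_iff₀ hε] at hlog
  rw [← mul_div_assoc, div_le_iff₀ (by positivity)]
  linarith

lemma le_threshold_of_contraction {e ζ : ℕ → ℝ} {C : ℝ} (hζ : ∀ t, ζ t = C / 5 ^ (t - 1))
    (h0 : e 0 ≤ C) (hstep : ∀ t, 1 ≤ t → e (t - 1) ≤ ζ t → e t ≤ ζ t / 5) (t : ℕ) :
    e t ≤ ζ (t + 1) := by
  induction t with
  | zero => simpa [hζ] using h0
  | succ t ih =>
    calc e (t + 1) ≤ ζ (t + 1) / 5 := hstep (t + 1) (by omega) ih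
      _ = ζ (t + 1 + 1) := by simp [hζ, pow_succ, div_div]

section RobustPCA

variable {ι : Type*} [Fintype ι] [DecidableEq ι]

/-- With the convention `x / 0 = 0`, a vanishing denominator in `hz` forces `z = 0`;
otherwise `κ ≠ 0`, hence `σ_min F > 0`. -/
lemma twenty_mul_sq_le_one_of_sparsity {k : Type*} [Fintype k] [DecidableEq k]
    {F : Matrix k ι ℝ} {d n z : ℕ} {μ κ : ℝ} (hF : F * pinv F = 1)
    (hκ : κ = ‖F‖ / sigmaMin F) (hz : (z : ℝ) ≤ n / (20 * μ ^ 2 * d * κ ^ 2)) :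
    20 * z * ‖pinv F‖ ^ 2 * (‖F‖ * (μ * √(d / n))) ^ 2 ≤ 1 := by
  rcases Nat.eq_zero_or_pos z with rfl | hz0
  · simp
  have hz1 : (1 : ℝ) ≤ z := by exact_mod_cast hz0
  have hden : 0 < 20 * μ ^ 2 * d * κ ^ 2 := by
    refine (by positivity : (0 : ℝ) ≤ 20 * μ ^ 2 * d * κ ^ 2).lt_of_ne fun h => ?_
    rw [← h, div_zero] at hz
    linarith
  have hσ : 0 < sigmaMin F := (sigmaMin_nonneg F).lt_of_ne' fun h => by
    rw [hκ, h, div_zero] at hden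
    simp at hden
  rw [le_div_iff₀ hden] at hz
  have hn : (0 : ℝ) < n := by nlinarith
  have hp : ‖pinv F‖ ^ 2 ≤ (sigmaMin F)⁻¹ ^ 2 := by
    gcongr
    exact l2_opNorm_pinv_le hF hσ
  calc 20 * z * ‖pinv F‖ ^ 2 * (‖F‖ * (μ * √(d / n))) ^ 2
      = 20 * z * ‖pinv F‖ ^ 2 * (‖F‖ ^ 2 * μ ^ 2 * (d / n)) := by
        rw [mul_pow, mul_pow, Real.sq_sqrt (by positivity), mul_assoc (‖F‖ ^ 2)]
    _ ≤ 20 * z * (sigmaMin F)⁻¹ ^ 2 * (‖F‖ ^ 2 * μ ^ 2 * (d / n)) := by gcongr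
    _ = z * (20 * μ ^ 2 * d * κ ^ 2) / n := by
        rw [hκ]
        field_simp
    _ ≤ 1 := (div_le_one hn).mpr hz

theorem infNorm_lowRank_error_le {d r z : ℕ} {F : Matrix (Fin d) ι ℝ} {G : ℝ}
    (hF : F * pinv F = 1) (hG : ∀ i, ‖toLp 2 (Fᵀ i)‖ ≤ G)
    (hz : 20 * z * ‖pinv F‖ ^ 2 * G ^ 2 ≤ 1) {Wstar W : Matrix (Fin d) (Fin d) ℝ}
    (hWr : Wstar.rank ≤ r) {E : Matrix ι ι ℝ} (hr : ∀ i, nnzRow E i ≤ z)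
    (hc : ∀ j, nnzCol E j ≤ z)
    (hW : IsTruncatedEigen r ((pinv F)ᵀ * (Fᵀ * Wstar * F + E) * pinv F) W) :
    infNorm (Fᵀ * Wstar * F - Fᵀ * W * F) ≤ infNorm E / 10 := by
  set Δ := (pinv F)ᵀ * E * pinv F
  have hA : (pinv F)ᵀ * (Fᵀ * Wstar * F + E) * pinv F = Wstar + Δ := by
    have hFt : (pinv F)ᵀ * Fᵀ = 1 := by rw [← transpose_mul, hF, transpose_one]
    rw [Matrix.mul_add, Matrix.add_mul]
    congr 1
    calc (pinv F)ᵀ * (Fᵀ * Wstar * F) * pinv F = (pinv F)ᵀ * Fᵀ * Wstar * (F * pinv F) := by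
          simp only [Matrix.mul_assoc]
      _ = Wstar := by rw [hFt, hF, Matrix.one_mul, Matrix.mul_one]
  have hΔ : ‖Δ‖ ≤ ‖pinv F‖ ^ 2 * (z * infNorm E) :=
    calc ‖Δ‖ ≤ ‖(pinv F)ᵀ‖ * ‖E‖ * ‖pinv F‖ := by grw [l2_opNorm_mul, l2_opNorm_mul]
      _ ≤ ‖pinv F‖ * (z * infNorm E) * ‖pinv F‖ := by
          rw [l2_opNorm_transpose]
          gcongr
          exact l2_opNorm_le_nnz_mul_infNorm E hr hc
      _ = ‖pinv F‖ ^ 2 * (z * infNorm E) := by ring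
  have hWW : ‖Wstar - W‖ ≤ 2 * ‖Δ‖ := by
    have htrunc := l2_opNorm_sub_le_of_isTruncatedEigen hW hA hWr
    rw [hA] at htrunc
    calc ‖Wstar - W‖ = ‖-(W - (Wstar + Δ)) - Δ‖ := by congr 1; abel
      _ ≤ ‖W - (Wstar + Δ)‖ + ‖Δ‖ := by grw [norm_sub_le, norm_neg]
      _ ≤ 2 * ‖Δ‖ := by linarith
  have hE := infNorm_nonneg E
  calc infNorm (Fᵀ * Wstar * F - Fᵀ * W * F) = infNorm (Fᵀ * (Wstar - W) * F) := by
        rw [Matrix.mul_sub, Matrix.sub_mul]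
    _ ≤ ‖Wstar - W‖ * G ^ 2 := infNorm_transpose_mul_mul_le hG _
    _ ≤ 2 * (‖pinv F‖ ^ 2 * (z * infNorm E)) * G ^ 2 := by gcongr; linarith
    _ = 20 * z * ‖pinv F‖ ^ 2 * G ^ 2 * (infNorm E / 10) := by ring
    _ ≤ infNorm E / 10 := mul_le_of_le_one_left (by positivity) hz

theorem iterate_contraction {d r z : ℕ} {F : Matrix (Fin d) ι ℝ} {G ζ : ℝ}
    (hF : F * pinv F = 1) (hG : ∀ i, ‖toLp 2 (Fᵀ i)‖ ≤ G)
    (hz : 20 * z * ‖pinv F‖ ^ 2 * G ^ 2 ≤ 1) {Wstar W : Matrix (Fin d) (Fin d) ℝ}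
    (hWr : Wstar.rank ≤ r) {Sstar Lprev : Matrix ι ι ℝ} (hr : ∀ i, nnzRow Sstar i ≤ z)
    (hc : ∀ j, nnzCol Sstar j ≤ z) (hprev : infNorm (Fᵀ * Wstar * F - Lprev) ≤ ζ)
    (hW : IsTruncatedEigen r ((pinv F)ᵀ * (Fᵀ * Wstar * F + Sstar -
      hardThresh ζ (Fᵀ * Wstar * F + Sstar - Lprev)) * pinv F) W) :
    infNorm (Sstar - hardThresh ζ (Fᵀ * Wstar * F + Sstar - Lprev)) ≤ 2 * ζ ∧
      infNorm (Fᵀ * Wstar * F - Fᵀ * W * F) ≤ ζ / 5 := by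
  obtain ⟨hE, hsupp⟩ := sparse_recovery (Sstar := Sstar) hprev
  refine ⟨hE, (infNorm_lowRank_error_le hF hG hz hWr
    (fun i => (nnzRow_le_of_ne_zero hsupp i).trans (hr i))
    (fun j => (nnzCol_le_of_ne_zero hsupp j).trans (hc j)) ?_).trans (by linarith)⟩
  convert hW using 3
  abel

end RobustPCA

theorem stmt16_general {d n r z : ℕ} (F : Matrix (Fin d) (Fin n) ℝ)
    (U : Matrix (Fin d) (Fin d) ℝ) (σ : Fin d → ℝ) (V : Matrix (Fin n) (Fin d) ℝ)
    (μ κ c_W : ℝ) (hrk : F.rank = d)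
    (hVo : Vᵀ * V = 1) (hFsvd : F = U * Matrix.diagonal σ * Vᵀ)
    (hinc : ∀ i, Real.sqrt (∑ j, V i j ^ 2) ≤ μ * Real.sqrt ((d : ℝ) / n))
    (hκ : κ = specNorm F / sigmaMin F)
    (Wstar : Matrix (Fin d) (Fin d) ℝ) (hWr : Wstar.rank = r)
    (hWb : specNorm Wstar ≤ c_W)
    (Sstar M : Matrix (Fin n) (Fin n) ℝ)
    (hrow : ∀ i, nnzRow Sstar i ≤ z) (hcol : ∀ j, nnzCol Sstar j ≤ z)
    (hz : (z : ℝ) ≤ (n : ℝ) / (20 * μ ^ 2 * d * κ ^ 2))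
    (hM : M = Fᵀ * Wstar * F + Sstar)
    (L S : ℕ → Matrix (Fin n) (Fin n) ℝ) (W : ℕ → Matrix (Fin d) (Fin d) ℝ)
    (ζ : ℕ → ℝ)
    (hζ : ∀ t : ℕ, ζ t = μ ^ 2 * specNorm F ^ 2 * ((d : ℝ) / n) * c_W / 5 ^ (t - 1))
    (hL0 : L 0 = 0)
    (hS : ∀ t : ℕ, 1 ≤ t → S t = hardThresh (ζ t) (M - L (t - 1)))
    (hWt : ∀ t : ℕ, 1 ≤ t →
      IsTruncatedEigen r ((pinv F)ᵀ * (M - S t) * pinv F) (W t))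
    (hL : ∀ t : ℕ, 1 ≤ t → L t = Fᵀ * W t * F) :
    (∀ t : ℕ, 1 ≤ t → infNorm (Fᵀ * Wstar * F - L (t - 1)) ≤ ζ t →
        infNorm (Fᵀ * Wstar * F - L t) ≤ ζ t / 5) ∧
      ∀ ε : ℝ, 0 < ε → ∀ T : ℕ,
        ⌈Real.logb 5 (2 * μ ^ 2 * specNorm F ^ 2 * ((d : ℝ) / n) * c_W / ε)⌉₊ + 1 < T →
          infNorm (Fᵀ * Wstar * F - L T) ≤ ε ∧ infNorm (Sstar - S T) ≤ ε := by
  simp only [specNorm_eq_l2_opNorm] at hκ hWb hζ ⊢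
  subst hM
  have hF : F * pinv F = 1 := mul_pinv_eq_one (by rw [hrk, Fintype.card_fin])
  have hG := norm_toLp_transpose_apply_le_of_svd hVo hFsvd hinc
  have step : ∀ t, 1 ≤ t → infNorm (Fᵀ * Wstar * F - L (t - 1)) ≤ ζ t →
      infNorm (Sstar - S t) ≤ 2 * ζ t ∧ infNorm (Fᵀ * Wstar * F - L t) ≤ ζ t / 5 := by
    intro t ht hprev
    rw [hS t ht, hL t ht]
    exact iterate_contraction hF hG (twenty_mul_sq_le_one_of_sparsity hF hκ hz) hWr.le hrow hcol
      hprev (hS t ht ▸ hWt t ht)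
  have hbase : infNorm (Fᵀ * Wstar * F - L 0) ≤ μ ^ 2 * ‖F‖ ^ 2 * (d / n) * c_W := by
    rw [hL0, sub_zero]
    refine (infNorm_transpose_mul_mul_le hG Wstar).trans ?_
    rw [mul_pow, mul_pow, Real.sq_sqrt (by positivity)]
    nlinarith [mul_le_mul_of_nonneg_right hWb (by positivity : 0 ≤ ‖F‖ ^ 2 * (μ ^ 2 * (d / n)))]
  have hL_le := le_threshold_of_contraction hζ hbase fun t ht h => (step t ht h).2
  refine ⟨fun t ht h => (step t ht h).2, fun ε hε T hT => ?_⟩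
  have hT1 : 1 ≤ T := by omega
  obtain ⟨hST, hLT⟩ := step T hT1 (by simpa [Nat.sub_add_cancel hT1] using hL_le (T - 1))
  have hζT : 2 * ζ T ≤ ε := by
    have := (norm_nonneg Wstar).trans hWb
    rw [hζ]
    refine two_mul_div_five_pow_le (by positivity) hε ?_
    rwa [show 2 * (μ ^ 2 * ‖F‖ ^ 2 * (d / n) * c_W) = 2 * μ ^ 2 * ‖F‖ ^ 2 * (d / n) * c_W by ring]
  exact ⟨hLT.trans (by linarith [infNorm_nonneg (Sstar - S T)]), hST.trans hζT⟩

theorem stmt16 {d n r z : ℕ} (F : Matrix (Fin d) (Fin n) ℝ)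
    (U : Matrix (Fin d) (Fin d) ℝ) (σ : Fin d → ℝ) (V : Matrix (Fin n) (Fin d) ℝ)
    (μ κ c_W : ℝ) (hrk : F.rank = d)
    (hU : Uᵀ * U = 1) (hVo : Vᵀ * V = 1) (hFsvd : F = U * Matrix.diagonal σ * Vᵀ)
    (hinc : ∀ i, Real.sqrt (∑ j, V i j ^ 2) ≤ μ * Real.sqrt ((d : ℝ) / n))
    (hκ : κ = specNorm F / sigmaMin F)
    (Wstar : Matrix (Fin d) (Fin d) ℝ) (hWs : Wstar.IsSymm) (hWr : Wstar.rank = r)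
    (hWb : specNorm Wstar ≤ c_W)
    (Sstar M : Matrix (Fin n) (Fin n) ℝ)
    (hrow : ∀ i, nnzRow Sstar i ≤ z) (hcol : ∀ j, nnzCol Sstar j ≤ z)
    (hz : (z : ℝ) ≤ (n : ℝ) / (20 * μ ^ 2 * d * κ ^ 2))
    (hM : M = Fᵀ * Wstar * F + Sstar)
    (L S : ℕ → Matrix (Fin n) (Fin n) ℝ) (W : ℕ → Matrix (Fin d) (Fin d) ℝ)
    (ζ : ℕ → ℝ)
    (hζ : ∀ t : ℕ, ζ t = μ ^ 2 * specNorm F ^ 2 * ((d : ℝ) / n) * c_W / 5 ^ (t - 1))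
    (hL0 : L 0 = 0)
    (hS : ∀ t : ℕ, 1 ≤ t → S t = hardThresh (ζ t) (M - L (t - 1)))
    (hWt : ∀ t : ℕ, 1 ≤ t →
      IsTruncatedEigen r ((pinv F)ᵀ * (M - S t) * pinv F) (W t))
    (hL : ∀ t : ℕ, 1 ≤ t → L t = Fᵀ * W t * F) :
    (∀ t : ℕ, 1 ≤ t → infNorm (Fᵀ * Wstar * F - L (t - 1)) ≤ ζ t →
        infNorm (Fᵀ * Wstar * F - L t) ≤ ζ t / 5) ∧
      ∀ ε : ℝ, 0 < ε → ∀ T : ℕ,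
        ⌈Real.logb 5 (2 * μ ^ 2 * specNorm F ^ 2 * ((d : ℝ) / n) * c_W / ε)⌉₊ + 1 < T →
          infNorm (Fᵀ * Wstar * F - L T) ≤ ε ∧ infNorm (Sstar - S T) ≤ ε :=
  stmt16_general F U σ V μ κ c_W hrk hVo hFsvd hinc hκ Wstar hWr hWb Sstar M hrow hcol hz hM L S W ζ
    hζ hL0 hS hWt hL
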